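/- arXiv:1302.5076 — 3 statements merged into one kernel-verified Lean document; each statement's English description precedes it below -/
import Mathlib

section
/- Let (X,d) be a countable discrete metric space with bounded geometry. Suppose there exists a sequence of transition probabilities φ_n on X such that for every n there is R_n>0 with Supp(φ_n(x,·)) ⊆ B(x,R_n) for all x ∈ X, and such that for every K>0, lim_{n→∞} sup_{x,y ∈ X, d(x,y)<K} ‖φ_n(x,·) − φ_n(y,·)‖₁ = 0. Then there exists a transition probability P on X such that: (1) for every δ>0 there is R_δ>0 with ∑_{y ∈ B(x,R_δ)} P(x,y) > 1−δ for all x ∈ X; and (2) for every K>0, lim_{n→∞} sup_{x,y ∈ X, d(x,y)<K} ‖P^n(x,·) − P^n(y,·)‖₁ = 0. -/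
noncomputable def l1dist {X : Type*} (μ ν : X → ℝ) : ℝ := ∑' y, |μ y - ν y|

def IsProb {X : Type*} (μ : X → ℝ) : Prop := (∀ x, 0 ≤ μ x) ∧ HasSum μ 1

def IsTransProb {X : Type*} (P : X → X → ℝ) : Prop := ∀ x, IsProb (P x)

noncomputable def mconv {X : Type*} (μ : X → ℝ) (φ : X → X → ℝ) : X → ℝ :=
  fun y => ∑' x, μ x * φ x y

noncomputable def kpow {X : Type*} [DecidableEq X] (P : X → X → ℝ) : ℕ → X → X → ℝ
  | 0 => fun x y => if x = y then 1 else 0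
  | n + 1 => fun x y => ∑' z, kpow P n x z * P z y

/-- Bounded geometry: every ball of a given radius has uniformly bounded (finite) cardinality. -/
def BoundedGeometry (X : Type*) [MetricSpace X] : Prop :=
  ∀ C : ℝ, 0 < C → ∃ M : ℕ, ∀ x : X, (Metric.ball x C).Finite ∧ (Metric.ball x C).ncard ≤ M

/-!
Pass to a sparse subsequence `ψ k = φ (ν k)`: if `R k` bounds the support radius of `ψ k` and
`T k = R 0 + ⋯ + R (k - 1)`, choose `ψ k` to be `2⁻¹ ^ k`-flat at a scale that is huge compared
with `T k`, and put `P = ∑ₖ 2⁻¹ ^ (k + 1) ψ k`. The first `m` summands carry mass `1 - 2⁻¹ ^ m`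
and move points by less than `T m`, which gives the first property.

For the second, expand `P^(j+1) x = ∑ₖ wₖ (ψ k x * P^j)`. The summands with `k ≥ m` cost at most
`2⁻¹ ^ m`, because convolving with `P^j` is an `ℓ¹`-contraction. Those with `k < m` are bounded
by coupling `ψ k x` with `ψ k y` through points within `T m` of `x` and `y`. So
`‖P^j x - P^j y‖₁ ≤ 2 q^j + 2⁻¹ ^ m` with `q = 1 - 2⁻¹ ^ m`, as long as `d(x, y) + 2 j T m`
stays below the flatness scale of `ψ m`. For `n` steps take `m = log₄ n`, so that `q^n ≤ 2⁻¹ ^ m`.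
-/

open Finset Function

-- `mconv` with weights indexed by an arbitrary type, so that `∑ₖ wₖ ψ k` is a mixture as well.
noncomputable def mix {ι X : Type*} (w : ι → ℝ) (a : ι → X → ℝ) : X → ℝ :=
  fun y => ∑' k, w k * a k y

noncomputable def mixKernel {ι X : Type*} (w : ι → ℝ) (ψ : ι → X → X → ℝ) : X → X → ℝ :=
  fun x => mix w fun k => ψ k x

section Mixtures

variable {ι κ X : Type*}

theorem IsProb.le_one {μ : X → ℝ} (h : IsProb μ) (x : X) : μ x ≤ 1 :=
  le_hasSum h.2 x fun y _ => h.1 y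

theorem IsProb.summable_uncurry_mul {w : ι → ℝ} {a : ι → X → ℝ} (hw : IsProb w)
    (ha : ∀ k, IsProb (a k)) : Summable (uncurry fun k y => w k * a k y) := by
  refine (summable_prod_of_nonneg fun p => mul_nonneg (hw.1 p.1) ((ha p.1).1 p.2)).2
    ⟨fun k => (ha k).2.summable.mul_left (w k), ?_⟩
  simpa only [tsum_mul_left, (ha _).2.tsum_eq, mul_one] using hw.2.summable

theorem IsProb.summable_mul_apply {w : ι → ℝ} {a : ι → X → ℝ} (hw : IsProb w)
    (ha : ∀ k, IsProb (a k)) (y : X) : Summable fun k => w k * a k y :=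
  (hw.summable_uncurry_mul ha).prod_symm.prod_factor y

theorem IsProb.mix {w : ι → ℝ} {a : ι → X → ℝ} (hw : IsProb w) (ha : ∀ k, IsProb (a k)) :
    IsProb (mix w a) := by
  have hs := hw.summable_uncurry_mul ha
  refine ⟨fun y => tsum_nonneg fun k => mul_nonneg (hw.1 k) ((ha k).1 y), ?_⟩
  have hsum : Summable fun y => ∑' k, w k * a k y := hs.prod_symm.prod
  change HasSum (fun y => ∑' k, w k * a k y) 1
  rw [hsum.hasSum_iff, hs.tsum_comm]
  simp only [tsum_mul_left, (ha _).2.tsum_eq, mul_one, hw.2.tsum_eq]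

theorem IsTransProb.mixKernel {w : ι → ℝ} {ψ : ι → X → X → ℝ} (hw : IsProb w)
    (hψ : ∀ k, IsTransProb (ψ k)) : IsTransProb (mixKernel w ψ) :=
  fun x => hw.mix fun k => hψ k x

theorem mix_const {w : ι → ℝ} (hw : IsProb w) (μ : X → ℝ) : mix w (fun _ => μ) = μ := by
  ext y
  simp only [mix, tsum_mul_right, hw.2.tsum_eq, one_mul]

theorem mix_mix {w : ι → ℝ} {a : ι → κ → ℝ} {F : κ → X → ℝ} (hw : IsProb w)
    (ha : ∀ k, IsProb (a k)) (hF : ∀ z, IsProb (F z)) :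
    mix (mix w a) F = mix w fun k => mix (a k) F := by
  ext y
  have hs : Summable (uncurry fun k z => w k * a k z * F z y) :=
    (hw.summable_uncurry_mul ha).of_nonneg_of_le
      (fun p => mul_nonneg (mul_nonneg (hw.1 _) ((ha _).1 _)) ((hF _).1 y))
      (fun p => mul_le_of_le_one_right (mul_nonneg (hw.1 _) ((ha _).1 _)) ((hF _).le_one y))
  simp only [mix, ← tsum_mul_right, ← tsum_mul_left, ← mul_assoc]
  exact hs.tsum_comm

theorem IsProb.tsum_mul_le {w D : ι → ℝ} {C : ℝ} (hw : IsProb w)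
    (hD : Summable fun k => w k * D k) (h : ∀ k, w k ≠ 0 → D k ≤ C) :
    ∑' k, w k * D k ≤ C := by
  calc ∑' k, w k * D k ≤ ∑' k, w k * C := by
        refine hD.tsum_le_tsum (fun k => ?_) (hw.2.summable.mul_right C)
        rcases eq_or_ne (w k) 0 with hk | hk
        · simp [hk]
        · exact mul_le_mul_of_nonneg_left (h k hk) (hw.1 k)
    _ = C := by rw [tsum_mul_right, hw.2.tsum_eq, one_mul]

theorem IsProb.tsum_mul_le_of_finset {w D : ι → ℝ} {B ε : ℝ} (hw : IsProb w)
    (hD : Summable fun k => w k * D k) (A : Finset ι) (hA : ∀ k ∈ A, D k ≤ B)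
    (hAc : ∀ k ∉ A, D k ≤ ε) :
    ∑' k, w k * D k ≤ (∑ k ∈ A, w k) * B + (1 - ∑ k ∈ A, w k) * ε := by
  have hcompl : ∑' k : ↑(A : Set ι)ᶜ, w k = 1 - ∑ k ∈ A, w k := by
    rw [← hw.2.tsum_eq, ← hw.2.summable.sum_add_tsum_compl (s := A), add_sub_cancel_left]
  rw [← hD.sum_add_tsum_compl (s := A), sum_mul, ← hcompl, ← tsum_mul_right]
  refine add_le_add (sum_le_sum fun k hk => mul_le_mul_of_nonneg_left (hA k hk) (hw.1 k)) ?_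
  refine (A.summable_compl_iff.2 hD).tsum_le_tsum (fun k => ?_)
    ((A.summable_compl_iff.2 hw.2.summable).mul_right ε)
  exact mul_le_mul_of_nonneg_left (hAc k k.2) (hw.1 k)

end Mixtures

section L1

variable {ι X : Type*}

theorem l1dist_nonneg (μ ν : X → ℝ) : 0 ≤ l1dist μ ν :=
  tsum_nonneg fun _ => abs_nonneg _

theorem abs_sub_le_add_of_isProb {μ ν : X → ℝ} (hμ : IsProb μ) (hν : IsProb ν) (y : X) :
    |μ y - ν y| ≤ μ y + ν y :=
  (abs_sub _ _).trans_eq <| by rw [abs_of_nonneg (hμ.1 y), abs_of_nonneg (hν.1 y)]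

theorem summable_abs_sub_of_isProb {μ ν : X → ℝ} (hμ : IsProb μ) (hν : IsProb ν) :
    Summable fun y => |μ y - ν y| :=
  (hμ.2.summable.add hν.2.summable).of_nonneg_of_le (fun _ => abs_nonneg _)
    (abs_sub_le_add_of_isProb hμ hν)

theorem l1dist_le_two {μ ν : X → ℝ} (hμ : IsProb μ) (hν : IsProb ν) : l1dist μ ν ≤ 2 := by
  calc l1dist μ ν ≤ ∑' y, (μ y + ν y) :=
        (summable_abs_sub_of_isProb hμ hν).tsum_le_tsum (abs_sub_le_add_of_isProb hμ hν)
          (hμ.2.summable.add hν.2.summable)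
    _ = 2 := by rw [hμ.2.summable.tsum_add hν.2.summable, hμ.2.tsum_eq, hν.2.tsum_eq]; norm_num

theorem IsProb.summable_mul_l1dist {w : ι → ℝ} {a b : ι → X → ℝ} (hw : IsProb w)
    (ha : ∀ k, IsProb (a k)) (hb : ∀ k, IsProb (b k)) :
    Summable fun k => w k * l1dist (a k) (b k) :=
  (hw.2.summable.mul_right 2).of_nonneg_of_le
    (fun k => mul_nonneg (hw.1 k) (l1dist_nonneg _ _))
    (fun k => mul_le_mul_of_nonneg_left (l1dist_le_two (ha k) (hb k)) (hw.1 k))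

theorem tsum_abs_tsum_le {g : ι → X → ℝ} (hg : Summable (uncurry fun k y => |g k y|)) :
    ∑' y, |∑' k, g k y| ≤ ∑' k, ∑' y, |g k y| := by
  have hcol : Summable fun y => ∑' k, |g k y| := hg.prod_symm.prod
  have hrow : ∀ y, Summable fun k => ‖g k y‖ := hg.prod_symm.prod_factor
  have hle : ∀ y, |∑' k, g k y| ≤ ∑' k, |g k y| := fun y => norm_tsum_le_tsum_norm (hrow y)
  calc ∑' y, |∑' k, g k y| ≤ ∑' y, ∑' k, |g k y| :=
        (hcol.of_nonneg_of_le (fun _ => abs_nonneg _) hle).tsum_le_tsum hle hcol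
    _ = ∑' k, ∑' y, |g k y| := hg.tsum_comm

theorem l1dist_mix_le {w : ι → ℝ} {a b : ι → X → ℝ} (hw : IsProb w)
    (ha : ∀ k, IsProb (a k)) (hb : ∀ k, IsProb (b k)) :
    l1dist (mix w a) (mix w b) ≤ ∑' k, w k * l1dist (a k) (b k) := by
  have habs : ∀ k y, |w k * (a k y - b k y)| = w k * |a k y - b k y| := fun k y => by
    rw [abs_mul, abs_of_nonneg (hw.1 k)]
  have hg : Summable (uncurry fun k y => |w k * (a k y - b k y)|) := by
    refine (summable_prod_of_nonneg fun _ => abs_nonneg _).2 ⟨fun k => ?_, ?_⟩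
    · simpa only [habs] using (summable_abs_sub_of_isProb (ha k) (hb k)).mul_left (w k)
    · simpa only [habs, tsum_mul_left, l1dist] using hw.summable_mul_l1dist ha hb
  calc l1dist (mix w a) (mix w b) = ∑' y, |∑' k, w k * (a k y - b k y)| := by
        refine tsum_congr fun y => ?_
        rw [mix, mix, ← (hw.summable_mul_apply ha y).tsum_sub (hw.summable_mul_apply hb y)]
        simp only [mul_sub]
    _ ≤ ∑' k, ∑' y, |w k * (a k y - b k y)| := tsum_abs_tsum_le hg
    _ = ∑' k, w k * l1dist (a k) (b k) := by simp only [habs, tsum_mul_left, l1dist]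

theorem l1dist_mix_le_l1dist {μ ν : ι → ℝ} {F : ι → X → ℝ} (hμ : IsProb μ) (hν : IsProb ν)
    (hF : ∀ z, IsProb (F z)) : l1dist (mix μ F) (mix ν F) ≤ l1dist μ ν := by
  have habs : ∀ z y, |(μ z - ν z) * F z y| = |μ z - ν z| * F z y := fun z y => by
    rw [abs_mul, abs_of_nonneg ((hF z).1 y)]
  have hg : Summable (uncurry fun z y => |(μ z - ν z) * F z y|) := by
    refine (summable_prod_of_nonneg fun _ => abs_nonneg _).2 ⟨fun z => ?_, ?_⟩
    · simpa only [habs] using (hF z).2.summable.mul_left |μ z - ν z|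
    · simpa only [habs, tsum_mul_left, (hF _).2.tsum_eq, mul_one]
        using summable_abs_sub_of_isProb hμ hν
  calc l1dist (mix μ F) (mix ν F) = ∑' y, |∑' z, (μ z - ν z) * F z y| := by
        refine tsum_congr fun y => ?_
        rw [mix, mix, ← (hμ.summable_mul_apply hF y).tsum_sub (hν.summable_mul_apply hF y)]
        simp only [sub_mul]
    _ ≤ ∑' z, ∑' y, |(μ z - ν z) * F z y| := tsum_abs_tsum_le hg
    _ = l1dist μ ν := by simp only [habs, tsum_mul_left, (hF _).2.tsum_eq, mul_one, l1dist]

theorem l1dist_mix_le_of_forall_ne_zero {μ ν : ι → ℝ} {F : ι → X → ℝ} {C : ℝ}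
    (hμ : IsProb μ) (hν : IsProb ν) (hF : ∀ z, IsProb (F z))
    (h : ∀ z z', μ z ≠ 0 → ν z' ≠ 0 → l1dist (F z) (F z') ≤ C) :
    l1dist (mix μ F) (mix ν F) ≤ C := by
  have hνF : IsProb (mix ν F) := hν.mix hF
  have hz : ∀ z, μ z ≠ 0 → l1dist (F z) (mix ν F) ≤ C := fun z hz => by
    rw [← mix_const hν (F z)]
    exact (l1dist_mix_le hν (fun _ => hF z) hF).trans
      (hν.tsum_mul_le (hν.summable_mul_l1dist (fun _ => hF z) hF) fun z' hz' => h z z' hz hz')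
  rw [← mix_const hμ (mix ν F)]
  exact (l1dist_mix_le hμ hF fun _ => hνF).trans
    (hμ.tsum_mul_le (hμ.summable_mul_l1dist hF fun _ => hνF) hz)

end L1

section Kpow

variable {ι X : Type*} [DecidableEq X]

theorem kpow_succ_apply (P : X → X → ℝ) (n : ℕ) (x : X) :
    kpow P (n + 1) x = mix (kpow P n x) P :=
  rfl

theorem isProb_kpow {P : X → X → ℝ} (hP : IsTransProb P) (n : ℕ) (x : X) :
    IsProb (kpow P n x) := by
  induction n generalizing x with
  | zero =>
    refine ⟨fun y => by simp only [kpow]; split_ifs <;> norm_num, ?_⟩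
    simpa only [kpow, eq_comm] using hasSum_ite_eq x (1 : ℝ)
  | succ n ih => exact (ih x).mix hP

theorem kpow_succ_apply' {P : X → X → ℝ} (hP : IsTransProb P) (n : ℕ) (x : X) :
    kpow P (n + 1) x = mix (P x) (kpow P n) := by
  induction n generalizing x with
  | zero =>
    ext y
    simp [kpow, mix]
  | succ n ih => rw [kpow_succ_apply, ih, mix_mix (hP x) (isProb_kpow hP n) hP]; rfl

theorem kpow_mixKernel_succ_apply {w : ι → ℝ} {ψ : ι → X → X → ℝ} (hw : IsProb w)
    (hψ : ∀ k, IsTransProb (ψ k)) (n : ℕ) (x : X) :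
    kpow (mixKernel w ψ) (n + 1) x = mix w fun k => mix (ψ k x) (kpow (mixKernel w ψ) n) := by
  rw [kpow_succ_apply' (.mixKernel hw hψ), mixKernel,
    mix_mix hw (fun k => hψ k x) (isProb_kpow (.mixKernel hw hψ) n)]

end Kpow

theorem l1dist_kpow_mixKernel_le {ι X : Type*} [PseudoMetricSpace X] [DecidableEq X]
    {w : ι → ℝ} {ψ : ι → X → X → ℝ} (hw : IsProb w) (hψ : ∀ k, IsTransProb (ψ k))
    (A : Finset ι) {T S ε : ℝ} (hT : 0 ≤ T)
    (hnear : ∀ k ∈ A, ∀ x z, ψ k x z ≠ 0 → dist z x < T)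
    (hfar : ∀ k ∉ A, ∀ x y, dist x y < S → l1dist (ψ k x) (ψ k y) ≤ ε)
    (n : ℕ) (x y : X) (hxy : dist x y + 2 * n * T < S) :
    l1dist (kpow (mixKernel w ψ) n x) (kpow (mixKernel w ψ) n y)
      ≤ 2 * (∑ k ∈ A, w k) ^ n + ε * (1 - (∑ k ∈ A, w k) ^ n) := by
  set q := ∑ k ∈ A, w k
  induction n generalizing x y with
  | zero =>
    simpa using l1dist_le_two (isProb_kpow (.mixKernel hw hψ) 0 x)
      (isProb_kpow (.mixKernel hw hψ) 0 y)
  | succ n ih =>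
    have hF := isProb_kpow (.mixKernel hw hψ) n
    rw [kpow_mixKernel_succ_apply hw hψ, kpow_mixKernel_succ_apply hw hψ]
    refine (l1dist_mix_le hw (fun k => (hψ k x).mix hF) (fun k => (hψ k y).mix hF)).trans ?_
    refine (hw.tsum_mul_le_of_finset
      (hw.summable_mul_l1dist (fun k => (hψ k x).mix hF) (fun k => (hψ k y).mix hF))
      A (B := 2 * q ^ n + ε * (1 - q ^ n)) (ε := ε) (fun k hk => ?_) (fun k hk => ?_)).trans_eq
      (by ring)
    · refine l1dist_mix_le_of_forall_ne_zero (hψ k x) (hψ k y) hF fun z z' hz hz' => ih z z' ?_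
      have hzx := hnear k hk x z hz
      have hz'y := hnear k hk y z' hz'
      have := dist_triangle4 z x y z'
      rw [dist_comm y z'] at this
      push_cast at hxy
      linarith
    · refine (l1dist_mix_le_l1dist (hψ k x) (hψ k y) hF).trans (hfar k hk x y ?_)
      have : 0 ≤ 2 * ((n : ℝ) + 1) * T := by positivity
      push_cast at hxy
      linarith

theorem sum_le_tsum_subtype_mixKernel {ι X : Type*} {w : ι → ℝ} {ψ : ι → X → X → ℝ}
    (hw : IsProb w) (hψ : ∀ k, IsTransProb (ψ k)) (A : Finset ι) (U : Set X) (x : X)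
    (hU : ∀ k ∈ A, ∀ y, ψ k x y ≠ 0 → y ∈ U) :
    ∑ k ∈ A, w k ≤ ∑' y : U, mixKernel w ψ x y := by
  have hrow : ∀ k, Summable fun y : U => w k * ψ k x y := fun k =>
    ((hψ k x).2.summable.mul_left (w k)).subtype U
  calc ∑ k ∈ A, w k = ∑ k ∈ A, ∑' y : U, w k * ψ k x y := by
        refine sum_congr rfl fun k hk => ?_
        rw [tsum_mul_left, tsum_subtype_eq_of_support_subset fun y hy => hU k hk y hy,
          (hψ k x).2.tsum_eq, mul_one]
    _ = ∑' y : U, ∑ k ∈ A, w k * ψ k x y := (Summable.tsum_finsetSum fun k _ => hrow k).symm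
    _ ≤ ∑' y : U, mixKernel w ψ x y :=
        (summable_sum fun k _ => hrow k).tsum_le_tsum
          (fun y => (hw.summable_mul_apply (fun k => hψ k x) y).sum_le_tsum A
            fun k _ => mul_nonneg (hw.1 k) ((hψ k x).1 y))
          ((IsTransProb.mixKernel hw hψ x).2.summable.subtype U)

theorem exists_subseq_bounded_support_flat {X : Type*} [PseudoMetricSpace X] (φ : ℕ → X → X → ℝ)
    (hsupp : ∀ n : ℕ, ∃ R : ℝ, 0 < R ∧ ∀ x y : X, φ n x y ≠ 0 → y ∈ Metric.ball x R)
    (hflat : ∀ K : ℝ, 0 < K → ∀ ε : ℝ, 0 < ε → ∃ n : ℕ, ∀ x y : X, dist x y < K →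
      l1dist (φ n x) (φ n y) < ε)
    (S : ℕ → ℝ → ℝ) (ε : ℕ → ℝ) (hε : ∀ k, 0 < ε k) :
    ∃ (ν : ℕ → ℕ) (R : ℕ → ℝ), (∀ k, 0 ≤ R k) ∧ (∀ k x y, φ (ν k) x y ≠ 0 → dist y x < R k) ∧
      ∀ k x y, dist x y < S k (∑ i ∈ range k, R i) → l1dist (φ (ν k) x) (φ (ν k) y) < ε k := by
  have step : ∀ k (t : ℝ), ∃ (n : ℕ) (R : ℝ), 0 ≤ R ∧ (∀ x y, φ n x y ≠ 0 → dist y x < R) ∧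
      ∀ x y, dist x y < S k t → l1dist (φ n x) (φ n y) < ε k := by
    intro k t
    obtain ⟨n, hn⟩ := hflat (max (S k t) 1) (by positivity) (ε k) (hε k)
    obtain ⟨R, hR, hRn⟩ := hsupp n
    exact ⟨n, R, hR.le, hRn, fun x y h => hn x y (h.trans_le (le_max_left _ _))⟩
  choose ν R hR hνsupp hνflat using step
  let T : ℕ → ℝ := fun k => Nat.rec 0 (fun k t => t + R k t) k
  have hT : ∀ k, T k = ∑ i ∈ range k, R i (T i) := fun k => by
    induction k with
    | zero => rfl
    | succ k ih => rw [sum_range_succ, ← ih]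
  refine ⟨fun k => ν k (T k), fun k => R k (T k), fun k => hR _ _, fun k => hνsupp _ _, ?_⟩
  intro k x y hxy
  exact hνflat _ _ x y (by rwa [hT k])

theorem isProb_two_inv_pow_succ : IsProb fun k : ℕ => (2⁻¹ : ℝ) ^ (k + 1) :=
  ⟨fun k => by positivity, by
    have h := hasSum_geometric_two' (1 : ℝ)
    simp only [div_div, ← pow_succ'] at h
    simpa only [one_div, inv_pow] using h⟩

theorem sum_range_two_inv_pow_succ (m : ℕ) :
    ∑ k ∈ range m, (2⁻¹ : ℝ) ^ (k + 1) = 1 - 2⁻¹ ^ m := by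
  induction m with
  | zero => simp
  | succ m ih => rw [sum_range_succ, ih]; ring

theorem one_sub_two_inv_pow_pow_le {m n : ℕ} (h : 4 ^ m ≤ n) :
    (1 - (2⁻¹ : ℝ) ^ m) ^ n ≤ 2⁻¹ ^ m := by
  set s : ℝ := 2⁻¹ ^ m
  have hs0 : 0 ≤ s := by positivity
  have hs1 : s ≤ 1 := pow_le_one₀ (by norm_num) (by norm_num)
  have hprod : (1 - s) ^ n * (1 + s) ^ n ≤ 1 := by
    rw [← mul_pow]
    exact pow_le_one₀ (by nlinarith) (by nlinarith)
  have hns : (2 : ℝ) ^ m ≤ n * s := by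
    calc (2 : ℝ) ^ m = 4 ^ m * s := by rw [← mul_pow]; norm_num
      _ ≤ n * s := mul_le_mul_of_nonneg_right (by exact_mod_cast h) hs0
  have hbern : 1 + n * s ≤ (1 + s) ^ n := one_add_mul_le_pow (by linarith) n
  have hpos : 0 ≤ (1 - s) ^ n := pow_nonneg (by linarith) n
  have hinv : 2 ^ m * s = 1 := by rw [← mul_pow]; norm_num
  calc (1 - s) ^ n = (1 - s) ^ n * 2 ^ m * s := by rw [mul_assoc, hinv, mul_one]
    _ ≤ 1 * s := mul_le_mul_of_nonneg_right (by nlinarith) hs0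
    _ = s := one_mul s

theorem one_sub_two_inv_pow_le_tsum_ball_mixKernel {X : Type*} [PseudoMetricSpace X]
    {ψ : ℕ → X → X → ℝ} {R : ℕ → ℝ} (hψ : ∀ k, IsTransProb (ψ k)) (hR : ∀ k, 0 ≤ R k)
    (hsupp : ∀ k x y, ψ k x y ≠ 0 → dist y x < R k) (m : ℕ) (x : X) :
    1 - 2⁻¹ ^ m ≤ ∑' y : Metric.ball x (∑ i ∈ range m, R i + 1),
      mixKernel (fun k : ℕ => (2⁻¹ : ℝ) ^ (k + 1)) ψ x y := by
  rw [← sum_range_two_inv_pow_succ]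
  refine sum_le_tsum_subtype_mixKernel isProb_two_inv_pow_succ hψ (range m) _ x
    fun k hk y hy => Metric.mem_ball.2 ?_
  exact ((hsupp k x y hy).trans_le (single_le_sum (fun i _ => hR i) hk)).trans (lt_add_one _)

theorem l1dist_kpow_le_three_mul_two_inv_pow {X : Type*} [PseudoMetricSpace X] [DecidableEq X]
    {ψ : ℕ → X → X → ℝ} {R : ℕ → ℝ} (hψ : ∀ k, IsTransProb (ψ k)) (hR : ∀ k, 0 ≤ R k)
    (hsupp : ∀ k x y, ψ k x y ≠ 0 → dist y x < R k)
    (hflat : ∀ k x y, dist x y < k + 1 + 2 * 4 ^ (k + 1) * ∑ i ∈ range k, R i →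
      l1dist (ψ k x) (ψ k y) < 2⁻¹ ^ k)
    {m n : ℕ} (hmn : 4 ^ m ≤ n) (hnm : n < 4 ^ (m + 1)) {x y : X} (hxy : dist x y ≤ m) :
    l1dist (kpow (mixKernel (fun k : ℕ => (2⁻¹ : ℝ) ^ (k + 1)) ψ) n x)
      (kpow (mixKernel (fun k : ℕ => (2⁻¹ : ℝ) ^ (k + 1)) ψ) n y) ≤ 3 * 2⁻¹ ^ m := by
  set T := ∑ i ∈ range m, R i
  have hT : 0 ≤ T := sum_nonneg fun i _ => hR i
  have hnear : ∀ k ∈ range m, ∀ x z, ψ k x z ≠ 0 → dist z x < T := fun k hk x z hz =>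
    (hsupp k x z hz).trans_le (single_le_sum (fun i _ => hR i) hk)
  have hfar : ∀ k ∉ range m, ∀ x y, dist x y < m + 1 + 2 * 4 ^ (m + 1) * T →
      l1dist (ψ k x) (ψ k y) ≤ 2⁻¹ ^ m := fun k hk x y hxy => by
    have hmk : m ≤ k := by simpa using hk
    refine (hflat k x y (hxy.trans_le ?_)).le.trans
      (pow_le_pow_of_le_one (by norm_num) (by norm_num) hmk)
    gcongr
    · norm_num
    · exact sum_le_sum_of_subset_of_nonneg (range_mono hmk) fun i _ _ => hR i
  have hscale : dist x y + 2 * n * T < m + 1 + 2 * 4 ^ (m + 1) * T := by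
    have : (n : ℝ) * T ≤ 4 ^ (m + 1) * T := by gcongr; exact_mod_cast hnm.le
    linarith
  have hbound := l1dist_kpow_mixKernel_le isProb_two_inv_pow_succ hψ (range m) hT hnear hfar
    n x y hscale
  rw [sum_range_two_inv_pow_succ] at hbound
  have hsmall := one_sub_two_inv_pow_pow_le hmn
  have : (0 : ℝ) ≤ 2⁻¹ ^ m := by positivity
  have : (0 : ℝ) ≤ (1 - 2⁻¹ ^ m) ^ n :=
    pow_nonneg (sub_nonneg.2 (pow_le_one₀ (by norm_num) (by norm_num))) n
  nlinarith

theorem stmt2_general (X : Type*) [MetricSpace X] [DecidableEq X]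
    (φ : ℕ → X → X → ℝ) (hφ : ∀ n, IsTransProb (φ n))
    (hsupp : ∀ n : ℕ, ∃ R : ℝ, 0 < R ∧ ∀ x y : X, φ n x y ≠ 0 → y ∈ Metric.ball x R)
    (hlim : ∀ K : ℝ, 0 < K → ∀ ε : ℝ, 0 < ε → ∃ N : ℕ, ∀ n ≥ N, ∀ x y : X, dist x y < K →
      l1dist (φ n x) (φ n y) < ε) :
    ∃ P : X → X → ℝ, IsTransProb P ∧
      (∀ δ : ℝ, 0 < δ → ∃ R : ℝ, 0 < R ∧
        ∀ x : X, 1 - δ < ∑' y : Metric.ball x R, P x (y : X)) ∧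
      (∀ K : ℝ, 0 < K → ∀ ε : ℝ, 0 < ε → ∃ N : ℕ, ∀ n ≥ N, ∀ x y : X, dist x y < K →
        l1dist (kpow P n x) (kpow P n y) < ε) := by
  obtain ⟨ν, R, hR, hνsupp, hνflat⟩ := exists_subseq_bounded_support_flat φ hsupp
    (fun K hK ε hε => (hlim K hK ε hε).imp fun N hN => hN N le_rfl)
    (fun k t => k + 1 + 2 * 4 ^ (k + 1) * t) (fun k => 2⁻¹ ^ k) (fun k => by positivity)
  have hψ : ∀ k, IsTransProb (φ (ν k)) := fun k => hφ (ν k)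
  refine ⟨mixKernel (fun k => 2⁻¹ ^ (k + 1)) fun k => φ (ν k),
    .mixKernel isProb_two_inv_pow_succ hψ, fun δ hδ => ?_, fun K _ ε hε => ?_⟩
  · obtain ⟨m, hm⟩ := exists_pow_lt_of_lt_one hδ (by norm_num : (2⁻¹ : ℝ) < 1)
    refine ⟨∑ i ∈ range m, R i + 1, add_pos_of_nonneg_of_pos (sum_nonneg fun i _ => hR i) one_pos,
      fun x => ?_⟩
    linarith [one_sub_two_inv_pow_le_tsum_ball_mixKernel hψ hR hνsupp m x]
  · obtain ⟨M, hM⟩ := exists_pow_lt_of_lt_one (by positivity : 0 < ε / 3)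
      (by norm_num : (2⁻¹ : ℝ) < 1)
    refine ⟨4 ^ max M ⌈K⌉₊, fun n hn x y hxy => ?_⟩
    have hn0 : n ≠ 0 := ((by positivity : 0 < 4 ^ max M ⌈K⌉₊).trans_le hn).ne'
    have hm : max M ⌈K⌉₊ ≤ Nat.log 4 n := Nat.le_log_of_pow_le (by norm_num) hn
    have hK : K ≤ Nat.log 4 n :=
      (Nat.le_ceil K).trans (by exact_mod_cast (le_max_right _ _).trans hm)
    calc _ ≤ 3 * 2⁻¹ ^ Nat.log 4 n :=
          l1dist_kpow_le_three_mul_two_inv_pow hψ hR hνsupp hνflat (Nat.pow_log_le_self 4 hn0)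
            (Nat.lt_pow_succ_log_self (by norm_num) n) (hxy.le.trans hK)
      _ ≤ 3 * 2⁻¹ ^ M := mul_le_mul_of_nonneg_left
          (pow_le_pow_of_le_one (by norm_num) (by norm_num) ((le_max_left _ _).trans hm))
          (by norm_num)
      _ < ε := by linarith

theorem stmt2 (X : Type*) [MetricSpace X] [Countable X] [DiscreteTopology X] [DecidableEq X]
    (hBG : BoundedGeometry X)
    (φ : ℕ → X → X → ℝ) (hφ : ∀ n, IsTransProb (φ n))
    (hsupp : ∀ n : ℕ, ∃ R : ℝ, 0 < R ∧ ∀ x y : X, φ n x y ≠ 0 → y ∈ Metric.ball x R)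
    (hlim : ∀ K : ℝ, 0 < K → ∀ ε : ℝ, 0 < ε → ∃ N : ℕ, ∀ n ≥ N, ∀ x y : X, dist x y < K →
      l1dist (φ n x) (φ n y) < ε) :
    ∃ P : X → X → ℝ, IsTransProb P ∧
      (∀ δ : ℝ, 0 < δ → ∃ R : ℝ, 0 < R ∧
        ∀ x : X, 1 - δ < ∑' y : Metric.ball x R, P x (y : X)) ∧
      (∀ K : ℝ, 0 < K → ∀ ε : ℝ, 0 < ε → ∃ N : ℕ, ∀ n ≥ N, ∀ x y : X, dist x y < K →
        l1dist (kpow P n x) (kpow P n y) < ε) :=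
  stmt2_general X φ hφ hsupp hlim
end

section
/- Let (X,d) be a countable discrete metric space. Suppose there is a sequence of transition probabilities φ_n on X such that: (1) for every n and every δ>0 there is a number R_{δ,n}>0 such that for every x ∈ X, ∑_{y ∈ B(x,R_{δ,n})} φ_n(x,y) > 1−δ; and (2) for every K>0, lim_{n→∞} sup_{x,y ∈ X, d(x,y)<K} ‖φ_n(x,·) − φ_n(y,·)‖₁ = 0. Then there is a sequence of transition probabilities φ_n' on X such that: (1') for every n there is R_n'>0 with Supp(φ_n'(x,·)) ⊆ B(x,R_n') for all x ∈ X; and (2') for every K>0, lim_{n→∞} sup_{x,y ∈ X, d(x,y)<K} ‖φ_n'(x,·) − φ_n'(y,·)‖₁ = 0. -/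
/-!
Truncate `φ n x` to the ball `B(x, R_n)` on which it carries mass `> 1 - 1/(n+1)`, and put the
missing mass back as an atom at `x`. The new kernel has support in `B(x, R_n)` and lies within
`2/(n+1)` of `φ n x` in `ℓ¹`, uniformly in `x`; by the triangle inequality this small uniform
perturbation does not affect the asymptotic invariance (2).
-/

open Filter Topology

section L1

variable {X : Type*}

theorem l1dist_comm (μ ν : X → ℝ) : l1dist μ ν = l1dist ν μ := by
  simp only [l1dist, abs_sub_comm]

theorem l1dist_triangle {μ ν ρ : X → ℝ} (hμ : Summable μ) (hν : Summable ν) (hρ : Summable ρ) :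
    l1dist μ ρ ≤ l1dist μ ν + l1dist ν ρ := by
  unfold l1dist
  rw [← (hμ.sub hν).abs.tsum_add (hν.sub hρ).abs]
  exact (hμ.sub hρ).abs.tsum_le_tsum (fun y => abs_sub_le _ _ _)
    ((hμ.sub hν).abs.add (hν.sub hρ).abs)

end L1

section Prob

variable {X : Type*} {μ : X → ℝ}

theorem IsProb.summable (hμ : IsProb μ) : Summable μ := hμ.2.summable

theorem IsProb.hasSum_indicator (hμ : IsProb μ) (s : Set X) :
    HasSum (s.indicator μ) (∑' y : s, μ y) :=
  hasSum_subtype_iff_indicator.1 (hμ.summable.subtype s).hasSum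

theorem IsProb.hasSum_indicator_compl (hμ : IsProb μ) (s : Set X) :
    HasSum (sᶜ.indicator μ) (1 - ∑' y : s, μ y) := by
  rw [Set.indicator_compl]
  exact hμ.2.sub (hμ.hasSum_indicator s)

theorem IsProb.tsum_subtype_le_one (hμ : IsProb μ) (s : Set X) : ∑' y : s, μ y ≤ 1 :=
  sub_nonneg.1 <| (hμ.hasSum_indicator_compl s).nonneg
    fun y => Set.indicator_nonneg (fun z _ => hμ.1 z) y

end Prob

section Truncation

variable {X : Type*} [DecidableEq X]

noncomputable def truncKernel (P : X → X → ℝ) (s : X → Set X) : X → X → ℝ :=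
  fun x => (s x).indicator (P x) + Pi.single x (1 - ∑' y : s x, P x y)

variable {P : X → X → ℝ} {s : X → Set X}

theorem isTransProb_truncKernel (hP : IsTransProb P) :
    IsTransProb (truncKernel P s) := by
  intro x
  have hc : (0 : X → ℝ) ≤ Pi.single x (1 - ∑' y : s x, P x y) :=
    Pi.single_nonneg.2 (sub_nonneg.2 ((hP x).tsum_subtype_le_one (s x)))
  refine ⟨fun y => add_nonneg (Set.indicator_nonneg (fun z _ => (hP x).1 z) y) (hc y), ?_⟩
  have h := ((hP x).hasSum_indicator (s x)).add (hasSum_pi_single x (1 - ∑' y : s x, P x y))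
  rwa [add_sub_cancel] at h

theorem mem_of_truncKernel_ne_zero {x y : X} (hx : x ∈ s x) (hy : truncKernel P s x y ≠ 0) :
    y ∈ s x := by
  by_contra hys
  obtain ⟨rfl, -⟩ : y = x ∧ _ := by simpa [truncKernel, hys, Pi.single_apply] using hy
  exact hys hx

theorem l1dist_truncKernel_le (hP : IsTransProb P) (x : X) :
    l1dist (truncKernel P s x) (P x) ≤ 2 * (1 - ∑' y : s x, P x y) := by
  set c := 1 - ∑' y : s x, P x y
  have hc : (0 : X → ℝ) ≤ Pi.single x c :=
    Pi.single_nonneg.2 (sub_nonneg.2 ((hP x).tsum_subtype_le_one (s x)))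
  have hdiff : truncKernel P s x - P x = Pi.single x c - (s x)ᶜ.indicator (P x) := by
    rw [truncKernel, Set.indicator_compl]
    abel
  have hbound : ∀ y,
      |truncKernel P s x y - P x y| ≤ (Pi.single x c : X → ℝ) y + (s x)ᶜ.indicator (P x) y := by
    intro y
    rw [← Pi.sub_apply, hdiff, Pi.sub_apply]
    refine (abs_sub _ _).trans (le_of_eq ?_)
    rw [abs_of_nonneg (hc y),
      abs_of_nonneg (Set.indicator_nonneg (fun z _ => (hP x).1 z) y)]
  have hsum := (hasSum_pi_single x c).add ((hP x).hasSum_indicator_compl (s x))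
  calc l1dist (truncKernel P s x) (P x)
      ≤ c + c := hasSum_le hbound
        ((isTransProb_truncKernel hP x).summable.sub (hP x).summable).abs.hasSum hsum
    _ = 2 * c := by ring

end Truncation

section AsymptoticInvariance

variable {X : Type*} [PseudoMetricSpace X]

def IsAsymptoticallyInvariant (φ : ℕ → X → X → ℝ) : Prop :=
  ∀ K : ℝ, 0 < K → ∀ ε : ℝ, 0 < ε → ∃ N : ℕ, ∀ n ≥ N, ∀ x y : X, dist x y < K →
    l1dist (φ n x) (φ n y) < ε

theorem IsAsymptoticallyInvariant.of_l1dist_le {φ ψ : ℕ → X → X → ℝ}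
    (hφ : IsAsymptoticallyInvariant φ) (hφs : ∀ n x, Summable (φ n x))
    (hψs : ∀ n x, Summable (ψ n x)) {η : ℕ → ℝ} (hη : Tendsto η atTop (𝓝 0))
    (hclose : ∀ n x, l1dist (ψ n x) (φ n x) ≤ η n) : IsAsymptoticallyInvariant ψ := by
  intro K hK ε hε
  obtain ⟨N₁, hN₁⟩ := hφ K hK (ε / 2) (by positivity)
  obtain ⟨N₂, hN₂⟩ := eventually_atTop.1 (hη.eventually (gt_mem_nhds (by positivity : 0 < ε / 4)))
  refine ⟨max N₁ N₂, fun n hn x y hxy => ?_⟩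
  have hφxy := hN₁ n (le_of_max_le_left hn) x y hxy
  have hηn := hN₂ n (le_of_max_le_right hn)
  calc l1dist (ψ n x) (ψ n y)
      ≤ l1dist (ψ n x) (φ n x) + (l1dist (φ n x) (φ n y) + l1dist (φ n y) (ψ n y)) :=
        (l1dist_triangle (hψs n x) (hφs n x) (hψs n y)).trans <| by
          gcongr
          exact l1dist_triangle (hφs n x) (hφs n y) (hψs n y)
    _ < ε := by
        rw [l1dist_comm (φ n y)]
        linarith [hclose n x, hclose n y]

end AsymptoticInvariance

theorem stmt9_general {X : Type*} [MetricSpace X]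
    (φ : ℕ → X → X → ℝ) (hφ : ∀ n, IsTransProb (φ n))
    (h1 : ∀ n : ℕ, ∀ δ : ℝ, 0 < δ → ∃ R : ℝ, 0 < R ∧
      ∀ x : X, 1 - δ < ∑' y : Metric.ball x R, φ n x (y : X))
    (h2 : ∀ K : ℝ, 0 < K → ∀ ε : ℝ, 0 < ε → ∃ N : ℕ, ∀ n ≥ N, ∀ x y : X, dist x y < K →
      l1dist (φ n x) (φ n y) < ε) :
    ∃ ψ : ℕ → X → X → ℝ, (∀ n, IsTransProb (ψ n)) ∧
      (∀ n : ℕ, ∃ R : ℝ, 0 < R ∧ ∀ x y : X, ψ n x y ≠ 0 → y ∈ Metric.ball x R) ∧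
      (∀ K : ℝ, 0 < K → ∀ ε : ℝ, 0 < ε → ∃ N : ℕ, ∀ n ≥ N, ∀ x y : X, dist x y < K →
        l1dist (ψ n x) (ψ n y) < ε) := by
  classical
  choose R hRpos hR using fun n => h1 n (1 / (n + 1 : ℝ)) (by positivity)
  set B : ℕ → X → Set X := fun n x => Metric.ball x (R n)
  set ψ := fun n => truncKernel (φ n) (B n)
  have hψ : ∀ n, IsTransProb (ψ n) := fun n => isTransProb_truncKernel (hφ n)
  have hη : Tendsto (fun n : ℕ => 2 * (1 / (n + 1 : ℝ))) atTop (𝓝 0) := by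
    simpa using tendsto_one_div_add_atTop_nhds_zero_nat.const_mul (2 : ℝ)
  refine ⟨ψ, hψ, fun n => ⟨R n, hRpos n, fun x y hy =>
    mem_of_truncKernel_ne_zero (s := B n) (Metric.mem_ball_self (hRpos n)) hy⟩, ?_⟩
  refine IsAsymptoticallyInvariant.of_l1dist_le h2 (fun n x => (hφ n x).summable)
    (fun n x => (hψ n x).summable) hη fun n x => ?_
  linarith [l1dist_truncKernel_le (s := B n) (hφ n) x, hR n x]

theorem stmt9 {X : Type*} [MetricSpace X] [Countable X] [DiscreteTopology X]
    (φ : ℕ → X → X → ℝ) (hφ : ∀ n, IsTransProb (φ n))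
    (h1 : ∀ n : ℕ, ∀ δ : ℝ, 0 < δ → ∃ R : ℝ, 0 < R ∧
      ∀ x : X, 1 - δ < ∑' y : Metric.ball x R, φ n x (y : X))
    (h2 : ∀ K : ℝ, 0 < K → ∀ ε : ℝ, 0 < ε → ∃ N : ℕ, ∀ n ≥ N, ∀ x y : X, dist x y < K →
      l1dist (φ n x) (φ n y) < ε) :
    ∃ ψ : ℕ → X → X → ℝ, (∀ n, IsTransProb (ψ n)) ∧
      (∀ n : ℕ, ∃ R : ℝ, 0 < R ∧ ∀ x y : X, ψ n x y ≠ 0 → y ∈ Metric.ball x R) ∧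
      (∀ K : ℝ, 0 < K → ∀ ε : ℝ, 0 < ε → ∃ N : ℕ, ∀ n ≥ N, ∀ x y : X, dist x y < K →
        l1dist (ψ n x) (ψ n y) < ε) :=
  stmt9_general φ hφ h1 h2
end

section
/- For every nonempty countable discrete metric space (X,d) there is a transition probability P on X such that: (1) for every δ>0 there is R_δ>0 such that for every x ∈ X, ∑_{y ∈ B(x,R_δ)} P(x,y) > 1−δ; and (2) for every x, y ∈ X, lim_{n→∞} ‖P^n(x,·) − P^n(y,·)‖₁ = 0. -/
theorem stmt13 {X : Type*} [MetricSpace X] [Countable X] [DiscreteTopology X] [DecidableEq X]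
    [Nonempty X] :
    ∃ P : X → X → ℝ, IsTransProb P ∧
      (∀ δ : ℝ, 0 < δ → ∃ R : ℝ, 0 < R ∧
        ∀ x : X, 1 - δ < ∑' y : Metric.ball x R, P x (y : X)) ∧
      (∀ x y : X, Filter.Tendsto (fun n : ℕ => l1dist (kpow P n x) (kpow P n y))
        Filter.atTop (nhds 0)) := by
  classical
  obtain ⟨x₀⟩ := (inferInstance : Nonempty X)
  set e : X → ℝ := fun x => (1 + dist x x₀)⁻¹ with he_def
  have he_pos : ∀ x, 0 < e x := fun x => by
    have := dist_nonneg (x := x) (y := x₀)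
    simp only [he_def]
    positivity
  have he_le : ∀ x, e x ≤ 1 := by
    intro x
    have h : (1:ℝ) ≤ 1 + dist x x₀ := by linarith [dist_nonneg (x := x) (y := x₀)]
    simp only [he_def]
    exact inv_le_one_of_one_le₀ h
  set P : X → X → ℝ :=
    fun x y => (if y = x then 1 - e x else 0) + (if y = x₀ then e x else 0) with hP_def
  have hnonneg : ∀ x y, 0 ≤ P x y := by
    intro x y
    have h1 : 0 ≤ 1 - e x := by linarith [he_le x]
    have h2 : 0 ≤ e x := (he_pos x).le
    simp only [hP_def]
    split_ifs <;> linarith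
  have hsum : ∀ x, HasSum (P x) 1 := by
    intro x
    have h := (hasSum_ite_eq x (1 - e x)).add (hasSum_ite_eq x₀ (e x))
    have h2 : (1 - e x) + e x = 1 := by ring
    rwa [h2] at h
  have he_x0 : e x₀ = 1 := by simp [he_def]
  have hPx0 : ∀ y, P x₀ y = if y = x₀ then 1 else 0 := by
    intro y
    simp only [hP_def, he_x0]
    split_ifs <;> ring
  have hkpow : ∀ n (x y : X), kpow P n x y =
      (1 - e x)^n * (if y = x then 1 else 0) +
      (1 - (1 - e x)^n) * (if y = x₀ then 1 else 0) := by
    intro n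
    induction n with
    | zero =>
      intro x y
      by_cases h : x = y <;> simp [kpow, h, eq_comm]
    | succ n ih =>
      intro x y
      have hdecomp : ∀ z, kpow P n x z * P z y =
          (if z = x then (1 - e x)^n * P x y else 0) +
          (if z = x₀ then (1 - (1 - e x)^n) * P x₀ y else 0) := by
        intro z
        rw [ih x z]
        by_cases h1 : z = x
        · subst h1
          by_cases h2 : z = x₀
          · rw [← h2]; simp; try ring
          · simp [h2]; try ring
        · by_cases h2 : z = x₀
          · subst h2
            simp [h1]; try ring
          · simp [h1, h2]
      calc kpow P (n+1) x y = ∑' z, kpow P n x z * P z y := rfl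
        _ = ∑' z, ((if z = x then (1 - e x)^n * P x y else 0) +
              (if z = x₀ then (1 - (1 - e x)^n) * P x₀ y else 0)) := tsum_congr hdecomp
        _ = (1 - e x)^n * P x y + (1 - (1 - e x)^n) * P x₀ y := by
              rw [Summable.tsum_add (hasSum_ite_eq x _).summable (hasSum_ite_eq x₀ _).summable,
                tsum_ite_eq, tsum_ite_eq]
        _ = (1 - e x)^(n+1) * (if y = x then 1 else 0) +
              (1 - (1 - e x)^(n+1)) * (if y = x₀ then 1 else 0) := by
              rw [hPx0]
              simp only [hP_def]
              by_cases h3 : x = x₀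
              · subst h3
                by_cases h1 : y = x <;> simp [h1, he_x0] <;> ring
              · have h3' : ¬ x₀ = x := fun h => h3 h.symm
                by_cases h1 : y = x
                · have h2 : ¬ y = x₀ := fun h => h3 (h1.symm.trans h)
                  simp [h1, h2, h3, h3']; ring
                · by_cases h2 : y = x₀ <;> simp [h1, h2, h3, h3'] <;> ring
  refine ⟨P, fun x => ⟨hnonneg x, hsum x⟩, ?_, ?_⟩
  · -- concentration near the diagonal
    intro δ hδ
    refine ⟨δ⁻¹, by positivity, fun x => ?_⟩
    rw [tsum_subtype]
    by_cases hx : dist x₀ x < δ⁻¹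
    · have hind : Set.indicator (Metric.ball x δ⁻¹) (P x) = P x := by
        funext y
        by_cases hy : y ∈ Metric.ball x δ⁻¹
        · simp [hy]
        · have hyx : y ≠ x := by
            intro h
            apply hy
            simp only [h, Metric.mem_ball, dist_self]
            positivity
          have hy0 : y ≠ x₀ := by
            intro h
            subst h
            exact hy (by simpa [Metric.mem_ball] using hx)
          simp [hP_def, hyx, hy0, Set.indicator_of_notMem hy]
      rw [hind, (hsum x).tsum_eq]
      linarith
    · push_neg at hx
      have hbound : ∀ y, (if y = x then 1 - e x else 0) ≤
          Set.indicator (Metric.ball x δ⁻¹) (P x) y := by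
        intro y
        by_cases hy : y = x
        · subst hy
          have hmem : y ∈ Metric.ball y δ⁻¹ := by
            simp only [Metric.mem_ball, dist_self]
            positivity
          rw [Set.indicator_of_mem hmem]
          simp only [hP_def, if_pos rfl]
          split_ifs <;> simp <;> linarith [he_pos y]
        · simp only [if_neg hy]
          exact Set.indicator_nonneg (fun z _ => hnonneg x z) y
      have hsummable : Summable (Set.indicator (Metric.ball x δ⁻¹) (P x)) :=
        (hsum x).summable.indicator _
      have hle := Summable.tsum_le_tsum hbound (hasSum_ite_eq x (1 - e x)).summable hsummable
      rw [tsum_ite_eq] at hle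
      have hex : e x < δ := by
        have h1 : δ⁻¹ < 1 + dist x x₀ := by
          rw [dist_comm x x₀]; linarith
        have h2 : (1 + dist x x₀)⁻¹ < (δ⁻¹)⁻¹ := by
          apply inv_strictAnti₀ (by positivity) h1
        rwa [inv_inv] at h2
      linarith
  · -- mixing
    intro x y
    set a := 1 - e x with ha_def
    set b := 1 - e y with hb_def
    have ha0 : 0 ≤ a := by simp only [ha_def]; linarith [he_le x]
    have ha1 : a < 1 := by simp only [ha_def]; linarith [he_pos x]
    have hb0 : 0 ≤ b := by simp only [hb_def]; linarith [he_le y]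
    have hb1 : b < 1 := by simp only [hb_def]; linarith [he_pos y]
    have hbound : ∀ n, l1dist (kpow P n x) (kpow P n y) ≤ a^n + b^n + (a^n + b^n) := by
      intro n
      have h1 : (0:ℝ) ≤ a^n := pow_nonneg ha0 n
      have h2 : (0:ℝ) ≤ b^n := pow_nonneg hb0 n
      have hpt : ∀ z, |kpow P n x z - kpow P n y z| ≤
          (if z = x then a^n else 0) + (if z = y then b^n else 0) +
          (if z = x₀ then a^n + b^n else 0) := by
        intro z
        rw [hkpow, hkpow]
        refine abs_le.mpr ⟨?_, ?_⟩ <;> split_ifs <;> nlinarith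
      have hsumG : Summable (fun z => (if z = x then a^n else 0) + (if z = y then b^n else 0) +
          (if z = x₀ then a^n + b^n else 0)) :=
        ((hasSum_ite_eq x _).summable.add (hasSum_ite_eq y _).summable).add
          (hasSum_ite_eq x₀ _).summable
      have hsum1 : Summable (fun z => |kpow P n x z - kpow P n y z|) :=
        Summable.of_nonneg_of_le (fun z => abs_nonneg _) hpt hsumG
      have hle := Summable.tsum_le_tsum hpt hsum1 hsumG
      have hG : ∑' z, ((if z = x then a^n else 0) + (if z = y then b^n else 0) +
          (if z = x₀ then a^n + b^n else 0)) = a^n + b^n + (a^n + b^n) := by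
        rw [Summable.tsum_add ((hasSum_ite_eq x _).summable.add (hasSum_ite_eq y _).summable)
            (hasSum_ite_eq x₀ _).summable,
          Summable.tsum_add (hasSum_ite_eq x _).summable (hasSum_ite_eq y _).summable,
          tsum_ite_eq, tsum_ite_eq, tsum_ite_eq]
      rw [hG] at hle
      exact hle
    have hgeo : Filter.Tendsto (fun n : ℕ => a^n + b^n + (a^n + b^n))
        Filter.atTop (nhds 0) := by
      have hA := tendsto_pow_atTop_nhds_zero_of_lt_one ha0 ha1
      have hB := tendsto_pow_atTop_nhds_zero_of_lt_one hb0 hb1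
      have := (hA.add hB).add (hA.add hB)
      simpa using this
    exact squeeze_zero (fun n => tsum_nonneg fun z => abs_nonneg _) hbound hgeo
end
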